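/- The fuse operation preserves query satisfaction: if a tree t satisfies a twig query q (i.e., q embeds into t), and t' is obtained from t by fusing two sibling nodes with the same label (replacing them by a single node with that label whose children are the union of the children subtrees of the two nodes), then q embeds into t'. -/

import Mathlib

open scoped Classical

variable {α : Type}

/-- Unordered words: multisets of symbols, as occurrence-count functions. -/
abbrev UWord (α : Type) := α → ℕ

/-- Multiplicities `*`, `+`, `?`, `0`, `1`. -/
inductive Mult : Type where
  | zero | one | opt | plus | star
deriving DecidableEq

/-- Interpretation of multiplicities as sets of natural numbers. -/
def Mult.sem : Mult → Set ℕ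
  | .zero => {0}
  | .one => {1}
  | .opt => {0, 1}
  | .plus => {n | 0 < n}
  | .star => Set.univ

/-- A disjunction `a₁^{M₁} | … | a_k^{M_k}`. -/
abbrev Disj (α : Type) := List (α × Mult)

/-- A disjunctive multiplicity expression `D₁^{M₁} ⊎ … ⊎ D_n^{M_n}`. -/
abbrev DME (α : Type) := List (Disj α × Mult)

/-- Language of `a^M`. -/
def singleLang (a : α) (m : Mult) : Set (UWord α) :=
  {w | w a ∈ m.sem ∧ ∀ b, b ≠ a → w b = 0}

/-- Language of a disjunction. -/
def disjLang (D : Disj α) : Set (UWord α) :=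
  {w | ∃ p ∈ D, w ∈ singleLang p.1 p.2}

/-- Pointwise (multiset) sum of a list of unordered words. -/
def sumWords (ws : List (UWord α)) : UWord α := fun a => (ws.map (fun u => u a)).sum

/-- Language of `D^M`. -/
def powLang (L : Set (UWord α)) (m : Mult) : Set (UWord α) :=
  {w | ∃ ws : List (UWord α), ws.length ∈ m.sem ∧ (∀ u ∈ ws, u ∈ L) ∧ w = sumWords ws}

/-- Language of a disjunctive multiplicity expression. -/
def dmeLang (E : DME α) : Set (UWord α) :=
  {w | ∃ ws : List (UWord α),
      List.Forall₂ (fun p u => u ∈ powLang (disjLang p.1) p.2) E ws ∧ w = sumWords ws}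

/-- Symbols occurring in a disjunctive multiplicity expression. -/
def dmeSymbols (E : DME α) : List α := E.flatMap (fun p => p.1.map Prod.fst)

/-- Normalized disjunctive multiplicity expression (each symbol occurs at most once,
each disjunction nonempty, and the two normal-form conditions of the paper). -/
def Normalized (E : DME α) : Prop :=
  (dmeSymbols E).Nodup ∧
  ∀ p ∈ E, p.1 ≠ [] ∧
    (p.2 ≠ Mult.one → p.2 = Mult.plus ∧ ∀ q ∈ p.1, q.2 = Mult.one) ∧
    ((∃ q ∈ p.1, (0 : ℕ) ∈ q.2.sem) → ∀ q ∈ p.1, (0 : ℕ) ∈ q.2.sem)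

/-- Conflicting pairs of siblings `C_E`. -/
def CE (E : DME α) : Set (α × α) :=
  {p | ¬ ∃ w ∈ dmeLang E, w p.1 ≠ 0 ∧ w p.2 ≠ 0}

/-- Extended cardinality map `N_E`. -/
def NE (E : DME α) : Set (α × ℕ) :=
  {p | ∃ w ∈ dmeLang E, w p.1 = p.2}

/-- Sets of required symbols `P_E`. -/
def PE (E : DME α) : Set (Set α) :=
  {X | ∀ w ∈ dmeLang E, ∃ a ∈ X, w a ≠ 0}

/-- Consistency of an unordered word with a characterizing triple. -/
def ConsTriple (w : UWord α) (C : Set (α × α)) (N : Set (α × ℕ)) (P : Set (Set α)) : Prop :=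
  (∀ p ∈ C, ¬ (w p.1 ≠ 0 ∧ w p.2 ≠ 0)) ∧
  (∀ a, (a, w a) ∈ N) ∧
  (∀ X ∈ P, ∃ a ∈ X, w a ≠ 0)

/-- Language of a disjunction-free multiplicity expression given as a list of
symbol/multiplicity pairs. -/
def dfLang (l : List (α × Mult)) : Set (UWord α) :=
  {w | (∀ p ∈ l, w p.1 ∈ p.2.sem) ∧ ∀ b, b ∉ l.map Prod.fst → w b = 0}

/-- Finite unordered trees. -/
inductive UTree (α : Type) : Type where
  | node : α → List (UTree α) → UTree α

def UTree.lab : UTree α → α | .node a _ => a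

def UTree.children : UTree α → List (UTree α) | .node _ ts => ts

/-- Twig queries: labels in `Σ ∪ {⋆}` (wildcard = `none`); each child subquery is tagged
with `false` for a child edge and `true` for a descendant edge. -/
inductive Twig (α : Type) : Type where
  | node : Option α → List (Twig α × Bool) → Twig α

/-- Proper subtree (proper descendant) relation. -/
inductive StrictDesc : UTree α → UTree α → Prop where
  | child {s t : UTree α} : s ∈ t.children → StrictDesc s t
  | step {s u t : UTree α} : StrictDesc s u → u ∈ t.children → StrictDesc s t

/-- `Sat t q`: the twig query `q` can be embedded in the tree `t`
(root to root, child edges to child edges, descendant edges to proper descendants,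
labels preserved up to wildcard). -/
def Sat : UTree α → Twig α → Prop
  | t, .node l qs =>
      (∀ x ∈ l, x = t.lab) ∧
      ∀ p ∈ qs, (p.2 = false → ∃ t' ∈ t.children, Sat t' p.1) ∧
                (p.2 = true → ∃ t', StrictDesc t' t ∧ Sat t' p.1)
termination_by t q => sizeOf q
decreasing_by
  all_goals
    obtain ⟨q', b'⟩ := p
    have h1 : sizeOf ((q', b') : Twig α × Bool) < sizeOf qs := List.sizeOf_lt_of_mem (by assumption)
    simp at h1 ⊢
    omega

/-- `TEmb t' t` : the tree `t'` can be embedded in the tree `t` (root-, child-, and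
label-preserving). -/
def TEmb : UTree α → UTree α → Prop
  | .node a ts', t => t.lab = a ∧ ∀ s' ∈ ts', ∃ s ∈ t.children, TEmb s' s

/-- `QGEmb E a q` : the twig query `q` can be embedded in the rooted graph with edge
relation `E` at root `a`. -/
def QGEmb (E : α → α → Prop) : α → Twig α → Prop
  | a, .node l qs =>
      (∀ x ∈ l, x = a) ∧
      ∀ p ∈ qs, (p.2 = false → ∃ b, E a b ∧ QGEmb E b p.1) ∧
                (p.2 = true → ∃ b, Relation.TransGen E a b ∧ QGEmb E b p.1)
termination_by a q => sizeOf q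
decreasing_by
  all_goals
    obtain ⟨q', b'⟩ := p
    have h1 : sizeOf ((q', b') : Twig α × Bool) < sizeOf qs := List.sizeOf_lt_of_mem (by assumption)
    simp at h1 ⊢
    omega

/-- Labeled paths of a tree: sequences of labels along root-to-node paths. -/
inductive IsLabPath : UTree α → List α → Prop where
  | root {a : α} {ts : List (UTree α)} : IsLabPath (UTree.node a ts) [a]
  | cons {a : α} {ts : List (UTree α)} {s : UTree α} {p : List α} :
      s ∈ ts → IsLabPath s p → IsLabPath (UTree.node a ts) (a :: p)

/-- Paths of a rooted graph: nonempty vertex sequences starting at the root and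
following edges. -/
def IsGPath (E : α → α → Prop) (root : α) (p : List α) : Prop :=
  p ≠ [] ∧ p.head? = some root ∧ p.Chain' E

/-- The unfolding of a rooted graph, truncated at depth `n`.  For a graph with no cycle
reachable from the root, taking `n = Fintype.card α` yields the full unfolding. -/
noncomputable def unfoldG [Fintype α] (E : α → α → Prop) : ℕ → α → UTree α
  | 0, a => .node a []
  | n + 1, a => .node a (((Finset.univ.filter fun b => E a b).toList).map (unfoldG E n))

/-- Number of leaves of a tree. -/
def leafCount : UTree α → ℕ
  | .node _ ts => if ts.isEmpty then 1 else (ts.attach.map (fun s => leafCount s.1)).sum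
decreasing_by
  have h1 := List.sizeOf_lt_of_mem s.2
  simp
  omega

/-- Disjunction-free multiplicity schema: a root label together with, for each label `a`,
a disjunction-free multiplicity expression given as the multiplicity `R a b` of every
symbol `b` (`Mult.zero` meaning `b` does not occur). -/
structure MS (α : Type) where
  root : α
  R : α → α → Mult

/-- Every node's children-label multiset matches the rule for the node's label. -/
inductive LocalOK [DecidableEq α] (R : α → α → Mult) : UTree α → Prop where
  | node {a : α} {ts : List (UTree α)} :
      (∀ b, ((ts.map UTree.lab).count b) ∈ (R a b).sem) →
      (∀ s ∈ ts, LocalOK R s) →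
      LocalOK R (UTree.node a ts)

/-- A tree satisfies a disjunction-free multiplicity schema. -/
def SatS [DecidableEq α] (S : MS α) (t : UTree α) : Prop :=
  t.lab = S.root ∧ LocalOK S.R t

/-- Edges of the universal dependency graph: `b` occurs in `R a` with multiplicity `+` or `1`. -/
def uEdge (S : MS α) (a b : α) : Prop := S.R a b = Mult.plus ∨ S.R a b = Mult.one

/-- Edges of the dependency graph: `b` occurs in `R a` with multiplicity in `{*,+,?,1}`. -/
def dEdge (S : MS α) (a b : α) : Prop := S.R a b ≠ Mult.zero

/-- A simulation of the rooted graph `(α, root, E)` in the tree `t`. -/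
def IsSimulation (E : α → α → Prop) (root : α) (t : UTree α) (R : α → UTree α → Prop) : Prop :=
  R root t ∧ (∀ a s, R a s → s.lab = a) ∧
  (∀ a s, R a s → ∀ b, E a b → ∃ s' ∈ s.children, R b s')

/-- One fuse step: two sibling nodes with the same label are merged into a single node
whose children are the children of both (applied anywhere in the tree). -/
inductive Fuse : UTree α → UTree α → Prop where
  | here {a b : α} {l₁ l₂ l₃ cs₁ cs₂ : List (UTree α)} :
      Fuse (UTree.node a (l₁ ++ UTree.node b cs₁ :: l₂ ++ UTree.node b cs₂ :: l₃))
           (UTree.node a (l₁ ++ UTree.node b (cs₁ ++ cs₂) :: l₂ ++ l₃))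
  | there {a : α} {s s' : UTree α} {l₁ l₂ : List (UTree α)} :
      Fuse s s' → Fuse (UTree.node a (l₁ ++ s :: l₂)) (UTree.node a (l₁ ++ s' :: l₂))

/-- One add step: an arbitrary new subtree is attached as an additional child of some
node of the tree. -/
inductive AddOp : UTree α → UTree α → Prop where
  | here {a : α} {s : UTree α} {l : List (UTree α)} :
      AddOp (UTree.node a l) (UTree.node a (s :: l))
  | there {a : α} {s s' : UTree α} {l₁ l₂ : List (UTree α)} :
      AddOp s s' → AddOp (UTree.node a (l₁ ++ s :: l₂)) (UTree.node a (l₁ ++ s' :: l₂))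

/-! Fusing two siblings `b(cs₁)` and `b(cs₂)` into `b(cs₁ ++ cs₂)` only enlarges the tree in the
sense of `TEmb`: each of the two siblings embeds into the merged node, and everything else embeds
into itself. Query satisfaction is upward closed under such embeddings, because an embedding
sends children to children, hence proper descendants to proper descendants, and preserves labels. -/

namespace TEmb

variable {α : Type}

theorem iff {s t : UTree α} :
    TEmb s t ↔ t.lab = s.lab ∧ ∀ c ∈ s.children, ∃ d ∈ t.children, TEmb c d := by
  cases s
  rw [TEmb]
  rfl

theorem lab_eq {s t : UTree α} (h : TEmb s t) : t.lab = s.lab :=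
  (iff.1 h).1

theorem exists_child {s t : UTree α} (h : TEmb s t) {c : UTree α} (hc : c ∈ s.children) :
    ∃ d ∈ t.children, TEmb c d :=
  (iff.1 h).2 c hc

theorem refl : ∀ t : UTree α, TEmb t t
  | .node a ts => by
    rw [TEmb]
    exact ⟨rfl, fun s hs => ⟨s, hs, refl s⟩⟩

theorem node_of_subset {a : α} {cs ds : List (UTree α)} (h : cs ⊆ ds) :
    TEmb (.node a cs) (.node a ds) := by
  rw [TEmb]
  exact ⟨rfl, fun c hc => ⟨c, h hc, refl c⟩⟩

theorem exists_strictDesc {s t u : UTree α} (h : TEmb s t) (hu : StrictDesc u s) :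
    ∃ v, StrictDesc v t ∧ TEmb u v := by
  induction hu generalizing t with
  | child hc =>
    obtain ⟨d, hd, hcd⟩ := h.exists_child hc
    exact ⟨d, .child hd, hcd⟩
  | step _ hc ih =>
    obtain ⟨d, hd, hcd⟩ := h.exists_child hc
    obtain ⟨v, hv, huv⟩ := ih hcd
    exact ⟨v, .step hv hd, huv⟩

theorem sat : ∀ {q : Twig α} {s t : UTree α}, TEmb s t → Sat s q → Sat t q
  | .node l qs, s, t, h, hq => by
    rw [Sat] at hq ⊢
    refine ⟨fun x hx => (hq.1 x hx).trans h.lab_eq.symm, fun p hp => ⟨fun hb => ?_, fun hb => ?_⟩⟩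
    · obtain ⟨c, hc, hcq⟩ := (hq.2 p hp).1 hb
      obtain ⟨d, hd, hcd⟩ := h.exists_child hc
      exact ⟨d, hd, sat hcd hcq⟩
    · obtain ⟨u, hu, huq⟩ := (hq.2 p hp).2 hb
      obtain ⟨v, hv, huv⟩ := h.exists_strictDesc hu
      exact ⟨v, hv, sat huv huq⟩
termination_by q => sizeOf q
decreasing_by
  all_goals
    obtain ⟨q', b'⟩ := p
    have := List.sizeOf_lt_of_mem hp
    simp at this ⊢
    omega

end TEmb

theorem Fuse.tEmb {α : Type} {t t' : UTree α} (h : Fuse t t') : TEmb t t' := by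
  induction h with
  | @here a b l₁ l₂ l₃ cs₁ cs₂ =>
    have hmerged : UTree.node b (cs₁ ++ cs₂) ∈ l₁ ++ UTree.node b (cs₁ ++ cs₂) :: l₂ ++ l₃ := by
      simp
    rw [TEmb]
    refine ⟨rfl, fun c hc => ?_⟩
    simp only [List.mem_append, List.mem_cons] at hc
    rcases hc with ((hc | rfl | hc) | rfl | hc)
    · exact ⟨c, by simp [UTree.children, hc], .refl c⟩
    · exact ⟨_, hmerged, .node_of_subset (List.subset_append_left _ _)⟩
    · exact ⟨c, by simp [UTree.children, hc], .refl c⟩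
    · exact ⟨_, hmerged, .node_of_subset (List.subset_append_right _ _)⟩
    · exact ⟨c, by simp [UTree.children, hc], .refl c⟩
  | there _ ih =>
    rw [TEmb]
    refine ⟨rfl, fun c hc => ?_⟩
    simp only [List.mem_append, List.mem_cons] at hc
    rcases hc with hc | rfl | hc
    · exact ⟨c, by simp [UTree.children, hc], .refl c⟩
    · exact ⟨_, by simp [UTree.children], ih⟩
    · exact ⟨c, by simp [UTree.children, hc], .refl c⟩

/-- the fuse operation preserves satisfaction of twig queries. -/
theorem fuse_preserves_query_satisfaction
    {α : Type} (t t' : UTree α) (q : Twig α)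
    (hf : Fuse t t') (hq : Sat t q) : Sat t' q :=
  hf.tEmb.sat hq
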